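/- (Polynomial degree bounds in z.) Suppose Z, W^1, …, W^8 ∈ ℂ⟦z, w^1, …, w^8⟧ are formal power series such that X = Z∂_z + Σ_{l=1}^8 W^l ∂_{w^l} is a formal infinitesimal CR-automorphism of M^1. Then, expanding each series with respect to powers of z, the coefficient of z^t in Z vanishes for all t ≥ 6; the coefficient of z^t in W^1 vanishes for all t ≥ 2; in W^2 and W^3 for all t ≥ 3; in W^4 and W^5 for all t ≥ 4; in W^6 for all t ≥ 1; and in W^7 and W^8 for all t ≥ 5. In particular Z and all W^l are polynomial in z. -/

import Mathlib

/-!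
Compare, in each tangency identity, the coefficients of monomials with small `ζ`-degree.
Modulo `ζ` the substitution `w ↦ ω + Ξ(z, ζ)` is the identity, while `conj(W^j)(ζ, ω)` and
`conj(Z)(ζ, ω)` do not involve `z`, and `∂_ζ Ξ_j` reduces modulo `ζ` to a multiple of
`z^{thr j - 1}`. Hence the coefficient of `z^t ζ⁰ ω^β` in the `j`-th identity is the coefficient
of `z^t ω^β` in `W^j` as soon as `t ≥ thr j`. For `Z` one reads off the coefficient of
`z^t ζ¹ ω^β` in the first identity, where `∂_z Ξ_1 = 2iζ`: every monomial of every `Ξ_l` has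
`z`-degree at most four times its `ζ`-degree, so the contribution of `W^1`, which is already
known to have `z`-degree at most `1`, vanishes for `t ≥ 6`.
-/

open MvPolynomial Complex

noncomputable section

/-- Variables of `ℂ⟦z, w¹, …, w⁸⟧`: `Sum.inl ()` is `z`, `Sum.inr l` is `w^{l+1}`. -/
abbrev CRVs : Type := Unit ⊕ Fin 8

/-- Variables of `ℂ⟦z, ζ, ω¹, …, ω⁸⟧`: `Sum.inl 0` is `z`, `Sum.inl 1` is `ζ`,
`Sum.inr l` is `ω^{l+1}`. -/
abbrev CRVb : Type := Fin 2 ⊕ Fin 8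

/-- The ring `ℂ[z, ζ, ω¹, …, ω⁸]`. -/
abbrev CRB : Type := MvPolynomial CRVb ℂ

def zB : CRB := X (Sum.inl 0)
def zbB : CRB := X (Sum.inl 1)

/-- The defining polynomials of the model `M¹` (with `z̄` replaced by `ζ`). -/
def XiM1 : Fin 8 → CRB :=
  ![ C (2*I) * zB * zbB,
     C (2*I) * (zB^2 * zbB + zB * zbB^2),
     2 * (zB^2 * zbB - zB * zbB^2),
     C (2*I) * (zB^3 * zbB + zB * zbB^3),
     2 * (zB^3 * zbB - zB * zbB^3),
     C (2*I) * zB^2 * zbB^2,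
     C (2*I) * (zB^4 * zbB + zB * zbB^4),
     2 * (zB^4 * zbB - zB * zbB^4) ]

/-- Substitution of the polynomials `a v` (each with zero constant term) for the
variables of a formal power series `f ∈ ℂ⟦z, w¹, …, w⁸⟧`, producing an element of
`ℂ⟦z, ζ, ω¹, …, ω⁸⟧`.  Because each `a v` used below has zero constant coefficient,
only the finitely many monomials of `f` of total degree at most the total degree of the
target exponent contribute to each coefficient, so the following finite sum computes the
genuine substitution `f(a)`. -/
def substPS (a : CRVs → CRB) (f : MvPowerSeries CRVs ℂ) : MvPowerSeries CRVb ℂ :=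
  fun e =>
    ∑ d ∈ Finset.Iic
        ((Finsupp.equivFunOnFinite.symm fun _ : CRVs => e.sum fun _ n => n) : CRVs →₀ ℕ),
      MvPowerSeries.coeff d f * MvPolynomial.coeff e (∏ v : CRVs, a v ^ d v)

/-- The substitution `z ↦ z`, `w^l ↦ ω^l + Ξ_l(z, ζ)`. -/
def substA : CRVs → CRB :=
  fun v => match v with
    | Sum.inl _ => zB
    | Sum.inr l => X (Sum.inr l) + XiM1 l

/-- The substitution `z ↦ ζ`, `w^l ↦ ω^l`. -/
def substB : CRVs → CRB :=
  fun v => match v with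
    | Sum.inl _ => zbB
    | Sum.inr l => X (Sum.inr l)

/-- Conjugation of all coefficients of a formal power series. -/
def psconj : MvPowerSeries CRVs ℂ →+* MvPowerSeries CRVs ℂ :=
  MvPowerSeries.map (starRingEnd ℂ)

/-- `X = Z∂_z + Σ_l W^l ∂_{w^l}` (with formal power series coefficients) is a formal
infinitesimal CR-automorphism of `M¹`: for each `j` the tangency identity
`W^j(z, ω + Ξ(z,ζ)) − conj(W^j)(ζ, ω) − Z(z, ω + Ξ(z,ζ))·∂_zΞ_j(z,ζ)
 − conj(Z)(ζ, ω)·∂_ζΞ_j(z,ζ) = 0` holds in `ℂ⟦z, ζ, ω¹, …, ω⁸⟧`. -/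
def IsFormalCRAut (Z : MvPowerSeries CRVs ℂ) (W : Fin 8 → MvPowerSeries CRVs ℂ) : Prop :=
  ∀ j : Fin 8,
    substPS substA (W j) - substPS substB (psconj (W j))
      - substPS substA Z * ((pderiv (Sum.inl 0) (XiM1 j) : CRB) : MvPowerSeries CRVb ℂ)
      - substPS substB (psconj Z) *
          ((pderiv (Sum.inl 1) (XiM1 j) : CRB) : MvPowerSeries CRVb ℂ) = 0

/-- Upper bounds on the degree in `z`: the coefficient of `z^t` in `W^{l+1}` vanishes as
soon as `t ≥ thr l`. -/
def thr : Fin 8 → ℕ := ![2, 3, 3, 4, 4, 1, 5, 5]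

namespace MvPolynomial

section WeightedDegree

variable {σ M : Type*} (R : Type*) [CommSemiring R] [AddCommMonoid M] [PartialOrder M]
  (w : σ → M)

def weightedDegreeLE (k : M) : Submodule R (MvPolynomial σ R) :=
  restrictSupport R {b | Finsupp.weight w b ≤ k}

variable {R w}

theorem coeff_eq_zero_of_mem_weightedDegreeLE {k : M} {p : MvPolynomial σ R}
    (hp : p ∈ weightedDegreeLE R w k) {b : σ →₀ ℕ} (hb : ¬Finsupp.weight w b ≤ k) :
    coeff b p = 0 :=
  notMem_support_iff.1 fun h => hb (hp h)

theorem X_mem_weightedDegreeLE (i : σ) : X i ∈ weightedDegreeLE R w (w i) :=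
  (monomial_mem_restrictSupport R).2 (Or.inl (by simp [Finsupp.weight_single]))

theorem one_mem_weightedDegreeLE : (1 : MvPolynomial σ R) ∈ weightedDegreeLE R w 0 :=
  (monomial_mem_restrictSupport R).2 (Or.inl (by simp))

theorem mul_mem_weightedDegreeLE [IsOrderedAddMonoid M] {k l : M} {p q : MvPolynomial σ R}
    (hp : p ∈ weightedDegreeLE R w k) (hq : q ∈ weightedDegreeLE R w l) :
    p * q ∈ weightedDegreeLE R w (k + l) := by
  refine restrictSupport_mono R ?_ ((restrictSupport_add R _ _).ge (Submodule.mul_mem_mul hp hq))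
  rintro _ ⟨a, ha, b, hb, rfl⟩
  simpa using add_le_add ha hb

theorem pow_mem_weightedDegreeLE [IsOrderedAddMonoid M] {k : M} {p : MvPolynomial σ R}
    (hp : p ∈ weightedDegreeLE R w k) : ∀ n : ℕ, p ^ n ∈ weightedDegreeLE R w (n • k)
  | 0 => by simpa using one_mem_weightedDegreeLE
  | n + 1 => by
    rw [pow_succ, succ_nsmul]
    exact mul_mem_weightedDegreeLE (pow_mem_weightedDegreeLE hp n) hp

theorem prod_pow_mem_weightedDegreeLE [IsOrderedAddMonoid M] {ι : Type*} [Fintype ι]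
    {p : ι → MvPolynomial σ R} {k : ι → M} (hp : ∀ i, p i ∈ weightedDegreeLE R w (k i))
    (n : ι → ℕ) :
    ∏ i, p i ^ n i ∈ weightedDegreeLE R w (∑ i, n i • k i) := by
  classical
  induction (Finset.univ : Finset ι) using Finset.induction_on with
  | empty => simpa using one_mem_weightedDegreeLE
  | insert i s hi ih =>
    rw [Finset.prod_insert hi, Finset.sum_insert hi]
    exact mul_mem_weightedDegreeLE (pow_mem_weightedDegreeLE (hp i) _) ih

end WeightedDegree

variable {σ R : Type*} [CommRing R]

theorem coeff_eq_of_sub_mem_span_X {s : σ} {p q : MvPolynomial σ R}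
    (h : p - q ∈ Ideal.span {X s}) {e : σ →₀ ℕ} (he : e s = 0) : coeff e p = coeff e q := by
  rw [← sub_eq_zero, ← coeff_sub]
  by_contra hne
  rw [← Set.image_singleton, mem_ideal_span_X_image] at h
  obtain ⟨_, rfl, hs⟩ := h e (mem_support_iff.2 hne)
  exact hs he

theorem prod_X_comp_pow_eq_monomial {ι : Type*} [Fintype ι] {g : ι → σ}
    (hg : Function.Injective g) (d : ι →₀ ℕ) :
    ∏ i, (X (g i) : MvPolynomial σ R) ^ d i = monomial (d.mapDomain g) 1 := by
  rw [monomial_eq, C_1, one_mul, Finsupp.prod_mapDomain_index_inj hg, Finsupp.prod_fintype]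
  simp

end MvPolynomial

theorem Ideal.prod_pow_sub_prod_pow_mem {A ι : Type*} [CommRing A] [Fintype ι] (I : Ideal A)
    {a b : ι → A} (h : ∀ i, a i - b i ∈ I) (n : ι → ℕ) :
    ∏ i, a i ^ n i - ∏ i, b i ^ n i ∈ I := by
  rw [← Ideal.Quotient.eq, map_prod, map_prod]
  simp only [map_pow, Ideal.Quotient.eq.2 (h _)]

theorem MvPowerSeries.coeff_mul_eq_zero_of_free {σ R : Type*} [CommSemiring R] {t : σ}
    {φ ψ : MvPowerSeries σ R} {e : σ →₀ ℕ} (hφ : ∀ a : σ →₀ ℕ, a t ≠ 0 → coeff a φ = 0)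
    (hψ : ∀ b ≤ e, b t = e t → coeff b ψ = 0) : coeff e (φ * ψ) = 0 := by
  classical
  refine (coeff_mul e φ ψ).trans (Finset.sum_eq_zero fun ⟨a, b⟩ hab => ?_)
  rw [Finset.HasAntidiagonal.mem_antidiagonal] at hab
  subst hab
  by_cases ha : a t = 0
  · rw [hψ b le_add_self (by simp [ha]), mul_zero]
  · rw [hφ a ha, zero_mul]

def liftVar (i : Fin 2) : CRVs → CRVb := Sum.map (fun _ => i) id

theorem liftVar_injective (i : Fin 2) : Function.Injective (liftVar i) :=
  Function.Injective.sumMap (fun _ _ _ => Subsingleton.elim _ _) Function.injective_id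

theorem inl_notMem_range_liftVar {i j : Fin 2} (h : j ≠ i) :
    (Sum.inl j : CRVb) ∉ Set.range (liftVar i) := by
  rintro ⟨_ | _, hv⟩ <;> simp_all [liftVar]

@[simp]
theorem mapDomain_liftVar_apply_self (i : Fin 2) (d : CRVs →₀ ℕ) :
    d.mapDomain (liftVar i) (Sum.inl i) = d (Sum.inl ()) :=
  Finsupp.mapDomain_apply (liftVar_injective i) d (Sum.inl ())

theorem mapDomain_liftVar_apply_of_ne {i j : Fin 2} (h : j ≠ i) (d : CRVs →₀ ℕ) :
    d.mapDomain (liftVar i) (Sum.inl j) = 0 :=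
  Finsupp.mapDomain_of_notMem_range d _ (inl_notMem_range_liftVar h)

theorem coeff_substPS_eq_zero {a : CRVs → CRB} {f : MvPowerSeries CRVs ℂ} {e : CRVb →₀ ℕ}
    (h : ∀ d, MvPowerSeries.coeff d f ≠ 0 → coeff e (∏ v, a v ^ d v) = 0) :
    MvPowerSeries.coeff e (substPS a f) = 0 :=
  Finset.sum_eq_zero fun d _ => by
    by_cases hd : MvPowerSeries.coeff d f = 0
    · rw [hd, zero_mul]
    · rw [h d hd, mul_zero]

theorem coeff_substPS_congr {a b : CRVs → CRB} (f : MvPowerSeries CRVs ℂ) {e : CRVb →₀ ℕ}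
    (h : ∀ d : CRVs →₀ ℕ, coeff e (∏ v, a v ^ d v) = coeff e (∏ v, b v ^ d v)) :
    MvPowerSeries.coeff e (substPS a f) = MvPowerSeries.coeff e (substPS b f) :=
  Finset.sum_congr rfl fun d _ => by rw [h d]

theorem coeff_substPS_X_comp_mapDomain {g : CRVs → CRVb} (hg : Function.Injective g)
    (f : MvPowerSeries CRVs ℂ) (d : CRVs →₀ ℕ) :
    MvPowerSeries.coeff (d.mapDomain g) (substPS (fun v => X (g v)) f)
      = MvPowerSeries.coeff d f := by
  rw [MvPowerSeries.coeff_apply, substPS, Finset.sum_eq_single_of_mem d]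
  · rw [prod_X_comp_pow_eq_monomial hg, coeff_monomial, if_pos rfl, mul_one]
  · refine Finset.mem_Iic.2 fun v => ?_
    exact (Finsupp.le_degree v d).trans (Finsupp.degree_mapDomain g d).ge
  · intro d' _ hd'
    rw [prod_X_comp_pow_eq_monomial hg, coeff_monomial,
      if_neg fun h => hd' (Finsupp.mapDomain_injective hg h), mul_zero]

theorem coeff_substPS_X_comp_eq_zero {g : CRVs → CRVb} (hg : Function.Injective g)
    (f : MvPowerSeries CRVs ℂ) {t : CRVb} (ht : t ∉ Set.range g) {e : CRVb →₀ ℕ}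
    (he : e t ≠ 0) : MvPowerSeries.coeff e (substPS (fun v => X (g v)) f) = 0 := by
  refine coeff_substPS_eq_zero fun d _ => ?_
  rw [prod_X_comp_pow_eq_monomial hg, coeff_monomial, if_neg]
  rintro rfl
  exact he (Finsupp.mapDomain_of_notMem_range d t ht)

/-- Contains the exponents of the monomials of `Ξ_{j+1}`; its last clause is where `thr j`
comes from. -/
def xiExponents (j : Fin 8) : Set (CRVb →₀ ℕ) :=
  {b | 1 ≤ b (Sum.inl 1) ∧ b (Sum.inl 0) ≤ 4 * b (Sum.inl 1) ∧
    (b (Sum.inl 1) = 1 → b (Sum.inl 0) < thr j)}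

theorem XiM1_mem_restrictSupport (j : Fin 8) : XiM1 j ∈ restrictSupport ℂ (xiExponents j) := by
  fin_cases j <;>
    simp only [Fin.zero_eta, Fin.mk_one, Fin.reduceFinMk, XiM1, Matrix.cons_val, zB, zbB,
      ← map_ofNat C, mul_add, mul_sub, X, monomial_pow, monomial_mul, C_mul_monomial] <;>
    try refine add_mem ?_ ?_
  all_goals try refine sub_mem ?_ ?_
  all_goals refine (monomial_mem_restrictSupport ℂ).2 (Or.inl ?_)
  all_goals simp [xiExponents, thr]

theorem coeff_XiM1_eq_zero {j : Fin 8} {b : CRVb →₀ ℕ} (hb : b ∉ xiExponents j) :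
    coeff b (XiM1 j) = 0 :=
  notMem_support_iff.1 fun h => hb (XiM1_mem_restrictSupport j h)

theorem XiM1_mem_span_X_zeta (j : Fin 8) : XiM1 j ∈ Ideal.span {(X (Sum.inl 1) : CRB)} := by
  rw [← Set.image_singleton, mem_ideal_span_X_image]
  intro b hb
  exact ⟨_, rfl, Nat.one_le_iff_ne_zero.1 (XiM1_mem_restrictSupport j hb).1⟩

def zWeight : CRVb → ℤ := Sum.elim ![1, -4] 0

theorem weight_zWeight (b : CRVb →₀ ℕ) :
    Finsupp.weight zWeight b = b (Sum.inl 0) - 4 * b (Sum.inl 1) := by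
  simp [Finsupp.weight_apply, Finsupp.sum_fintype, zWeight, sub_eq_add_neg, mul_comm]

theorem XiM1_mem_weightedDegreeLE (j : Fin 8) : XiM1 j ∈ weightedDegreeLE ℂ zWeight 0 := by
  refine restrictSupport_mono ℂ (fun b hb => ?_) (XiM1_mem_restrictSupport j)
  have := hb.2.1
  change Finsupp.weight zWeight b ≤ 0
  rw [weight_zWeight]
  omega

theorem coeff_pderiv_z_XiM1 (j : Fin 8) {b : CRVb →₀ ℕ} (hb : b (Sum.inl 1) = 0) :
    coeff b (pderiv (Sum.inl 0) (XiM1 j)) = 0 := by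
  rw [coeff_pderiv, coeff_XiM1_eq_zero, zero_mul]
  simp [xiExponents, hb]

theorem coeff_pderiv_zeta_XiM1 (j : Fin 8) {b : CRVb →₀ ℕ} (hb : b (Sum.inl 1) = 0)
    (hz : thr j ≤ b (Sum.inl 0)) : coeff b (pderiv (Sum.inl 1) (XiM1 j)) = 0 := by
  rw [coeff_pderiv, coeff_XiM1_eq_zero, zero_mul]
  simp [xiExponents, hb, hz]

theorem pderiv_z_XiM1_zero :
    pderiv (Sum.inl 0) (XiM1 0) = monomial (Finsupp.single (Sum.inl 1) 1) (2 * I) := by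
  rw [← C_mul_X_eq_monomial, C_mul]
  simp [XiM1, zB, zbB, pderiv_X, mul_comm]

theorem pderiv_zeta_XiM1_zero :
    pderiv (Sum.inl 1) (XiM1 0) = monomial (Finsupp.single (Sum.inl 0) 1) (2 * I) := by
  rw [← C_mul_X_eq_monomial, C_mul]
  simp [XiM1, zB, zbB, pderiv_X]

theorem substB_eq_X_liftVar : substB = fun v => X (liftVar 1 v) := by
  funext v
  cases v <;> rfl

theorem substA_sub_X_liftVar_mem (v : CRVs) :
    substA v - X (liftVar 0 v) ∈ Ideal.span {(X (Sum.inl 1) : CRB)} := by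
  cases v with
  | inl => simp [substA, liftVar, zB]
  | inr l => simpa [substA, liftVar] using XiM1_mem_span_X_zeta l

theorem coeff_substPS_substA_mapDomain (f : MvPowerSeries CRVs ℂ) (d : CRVs →₀ ℕ) :
    MvPowerSeries.coeff (d.mapDomain (liftVar 0)) (substPS substA f)
      = MvPowerSeries.coeff d f := by
  rw [coeff_substPS_congr f (b := fun v => X (liftVar 0 v)),
    coeff_substPS_X_comp_mapDomain (liftVar_injective 0)]
  intro d'
  refine coeff_eq_of_sub_mem_span_X ?_ (mapDomain_liftVar_apply_of_ne one_ne_zero d)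
  exact Ideal.prod_pow_sub_prod_pow_mem _ substA_sub_X_liftVar_mem _

theorem coeff_substPS_substB_eq_X_liftVar_zero (f : MvPowerSeries CRVs ℂ) {e : CRVb →₀ ℕ}
    (he : e (Sum.inl 0) ≠ 0) : MvPowerSeries.coeff e (substPS substB f) = 0 := by
  rw [substB_eq_X_liftVar]
  exact coeff_substPS_X_comp_eq_zero (liftVar_injective 1) f
    (inl_notMem_range_liftVar zero_ne_one) he

theorem prod_substA_pow_mem_weightedDegreeLE (d : CRVs →₀ ℕ) :
    ∏ v, substA v ^ d v ∈ weightedDegreeLE ℂ zWeight (d (Sum.inl ()) : ℤ) := by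
  have hA (v : CRVs) :
      substA v ∈ weightedDegreeLE ℂ zWeight (Sum.elim (fun _ => 1) (fun _ => 0) v) := by
    cases v with
    | inl => exact X_mem_weightedDegreeLE (Sum.inl 0)
    | inr l => exact add_mem (X_mem_weightedDegreeLE (Sum.inr l)) (XiM1_mem_weightedDegreeLE l)
  simpa [Fintype.sum_sum_type] using prod_pow_mem_weightedDegreeLE hA d

theorem coeff_substPS_substA_eq_zero {f : MvPowerSeries CRVs ℂ} {T : ℕ}
    (hf : ∀ d : CRVs →₀ ℕ, T ≤ d (Sum.inl ()) → MvPowerSeries.coeff d f = 0)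
    {e : CRVb →₀ ℕ} (he : T + 4 * e (Sum.inl 1) ≤ e (Sum.inl 0)) :
    MvPowerSeries.coeff e (substPS substA f) = 0 := by
  refine coeff_substPS_eq_zero fun d hd => ?_
  have hdT : d (Sum.inl ()) < T := by
    by_contra h
    exact hd (hf d (not_lt.1 h))
  refine coeff_eq_zero_of_mem_weightedDegreeLE (prod_substA_pow_mem_weightedDegreeLE d) ?_
  rw [weight_zWeight]
  omega

theorem IsFormalCRAut.coeff_W_eq_zero {Z : MvPowerSeries CRVs ℂ}
    {W : Fin 8 → MvPowerSeries CRVs ℂ} (h : IsFormalCRAut Z W) {j : Fin 8} {d : CRVs →₀ ℕ}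
    (hd : thr j ≤ d (Sum.inl ())) : MvPowerSeries.coeff d (W j) = 0 := by
  set e := d.mapDomain (liftVar 0)
  have heζ : e (Sum.inl 1) = 0 := mapDomain_liftVar_apply_of_ne one_ne_zero d
  have hez : e (Sum.inl 0) ≠ 0 := by
    have : 1 ≤ thr j := by fin_cases j <;> decide
    simp only [e, mapDomain_liftVar_apply_self]
    omega
  have hconj : MvPowerSeries.coeff e (substPS substB (psconj (W j))) = 0 :=
    coeff_substPS_substB_eq_X_liftVar_zero _ hez
  have hZ : MvPowerSeries.coeff e
      (substPS substA Z * ((pderiv (Sum.inl 0) (XiM1 j) : CRB) : MvPowerSeries CRVb ℂ)) = 0 := by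
    refine MvPowerSeries.X_dvd_iff.1 (dvd_mul_of_dvd_right ?_ _) e heζ
    exact MvPowerSeries.X_dvd_iff.2 fun b hb => by
      rw [coeff_coe, coeff_pderiv_z_XiM1 j hb]
  have hconjZ : MvPowerSeries.coeff e (substPS substB (psconj Z) *
      ((pderiv (Sum.inl 1) (XiM1 j) : CRB) : MvPowerSeries CRVb ℂ)) = 0 := by
    refine MvPowerSeries.coeff_mul_eq_zero_of_free (t := Sum.inl 0)
      (fun a ha => coeff_substPS_substB_eq_X_liftVar_zero _ ha) fun b hbe hbz => ?_
    rw [coeff_coe, coeff_pderiv_zeta_XiM1 j (Nat.eq_zero_of_le_zero (heζ ▸ hbe _))]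
    simpa [hbz, e] using hd
  have key := congrArg (MvPowerSeries.coeff e) (h j)
  rw [map_sub, map_sub, map_sub, hconj, hZ, hconjZ, coeff_substPS_substA_mapDomain,
    map_zero] at key
  simpa using key

theorem IsFormalCRAut.coeff_Z_eq_zero {Z : MvPowerSeries CRVs ℂ}
    {W : Fin 8 → MvPowerSeries CRVs ℂ} (h : IsFormalCRAut Z W) {d : CRVs →₀ ℕ}
    (hd : 6 ≤ d (Sum.inl ())) : MvPowerSeries.coeff d Z = 0 := by
  set e := d.mapDomain (liftVar 0) + Finsupp.single (Sum.inl 1) 1 with he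
  have hez : e (Sum.inl 0) = d (Sum.inl ()) := by simp [e]
  have heζ : e (Sum.inl 1) = 1 := by simp [e, mapDomain_liftVar_apply_of_ne one_ne_zero]
  have hW : MvPowerSeries.coeff e (substPS substA (W 0)) = 0 :=
    coeff_substPS_substA_eq_zero (T := thr 0) (fun _ => h.coeff_W_eq_zero)
      (by rw [hez, heζ]; exact hd)
  have hconj : MvPowerSeries.coeff e (substPS substB (psconj (W 0))) = 0 :=
    coeff_substPS_substB_eq_X_liftVar_zero _ (by omega)
  have hconjZ : MvPowerSeries.coeff e (substPS substB (psconj Z) *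
      MvPowerSeries.monomial (Finsupp.single (Sum.inl 0) 1) (2 * I)) = 0 := by
    refine MvPowerSeries.coeff_mul_eq_zero_of_free (t := Sum.inl 0)
      (fun a ha => coeff_substPS_substB_eq_X_liftVar_zero _ ha) fun b _ hbz => ?_
    rw [MvPowerSeries.coeff_monomial, if_neg]
    rintro rfl
    simp only [Finsupp.single_eq_same] at hbz
    omega
  have key := congrArg (MvPowerSeries.coeff e) (h 0)
  rw [pderiv_z_XiM1_zero, pderiv_zeta_XiM1_zero, coe_monomial, coe_monomial, map_sub, map_sub,
    map_sub, hW, hconj, hconjZ, he, MvPowerSeries.coeff_add_mul_monomial,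
    coeff_substPS_substA_mapDomain, map_zero] at key
  simpa [I_ne_zero] using key

/-- (Polynomial degree bounds in `z`.)  If `X = Z∂_z + Σ W^l ∂_{w^l}`, with formal power
series coefficients, is a formal infinitesimal CR-automorphism of `M¹`, then the
coefficient of `z^t` vanishes: in `Z` for `t ≥ 6`, in `W^1` for `t ≥ 2`, in `W^2, W^3`
for `t ≥ 3`, in `W^4, W^5` for `t ≥ 4`, in `W^6` for `t ≥ 1`, and in `W^7, W^8` for
`t ≥ 5`.  In particular `Z` and all `W^l` are polynomial in `z`. -/
theorem formal_CR_automorphism_polynomial_in_z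
    (Z : MvPowerSeries CRVs ℂ) (W : Fin 8 → MvPowerSeries CRVs ℂ)
    (h : IsFormalCRAut Z W) :
    (∀ d : CRVs →₀ ℕ, 6 ≤ d (Sum.inl ()) → MvPowerSeries.coeff d Z = 0) ∧
    (∀ (l : Fin 8) (d : CRVs →₀ ℕ), thr l ≤ d (Sum.inl ()) →
      MvPowerSeries.coeff d (W l) = 0) :=
  ⟨fun _ => h.coeff_Z_eq_zero, fun _ _ => h.coeff_W_eq_zero⟩

end
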